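/- The complete elliptic integral of the second kind, E : (0, 1) → ℝ, E(z) := ∫_0^{π/2} √(1 − z²·sin²(k)) dk, is transcendental over ℝ: for every nonzero polynomial p ∈ ℝ[X, Y] and all a < b with 0 < a < b < 1, there exists z ∈ (a, b) such that p(z, E(z)) ≠ 0. -/

import Mathlib

open scoped Real

noncomputable section

/-- The complete elliptic integral of the second kind,
`E(z) = ∫_0^{π/2} √(1 - z² sin²(k)) dk`. -/
def ellipticE (z : ℝ) : ℝ :=
  ∫ k in (0 : ℝ)..(π / 2), Real.sqrt (1 - z ^ 2 * Real.sin k ^ 2)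

/-!
Near `z = 1` put `u = 1 - z` and `v = E(z) - 1`. Rationalising the integrand of `E(z) - 1 =
∫ (√(1 - z² sin² k) - cos k) dk` gives `(1 - z²) sin² k / (√(1 - z² sin² k) + cos k)`, whose
denominator is comparable to `√(1 - z²) + (π/2 - k)`; integrating shows that `v` has the order
of `u log (1/u)`. Hence `u = o(v)` and `v^(k+1) = o(u^k)` for every `k`, and under these two
relations `u^i v^j` is negligible against `u^i₀ v^j₀` as soon as `(i₀ + j₀, i₀) < (i + j, i)`
lexicographically. The lexicographically least monomial of a nonzero polynomial in `u, v`
therefore dominates all the others, so the polynomial does not vanish on any interval `(1 - δ, 1)`.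

On the other hand `E` is real analytic on `(-1, 1)`, being the restriction of the holomorphic
function `w ↦ ∫ (1 - w² sin² t)^(1/2) dt` on the unit disc, so a polynomial relation between
`z` and `E(z)` on `(a, b)` persists up to `1`, after the affine change of variables to `(u, v)`.
-/

open Filter Topology Asymptotics Set

section Domination

variable {α 𝕜 : Type*} [NormedField 𝕜] {l : Filter α}

theorem not_eventually_sum_eq_zero_of_isLittleO {ι : Type*} {s : Finset ι} {c : ι → 𝕜}
    {f : ι → α → 𝕜} {i₀ : ι} (hi₀ : i₀ ∈ s) (hc : c i₀ ≠ 0) (hf : ∃ᶠ x in l, f i₀ x ≠ 0)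
    (ho : ∀ i ∈ s, i ≠ i₀ → f i =o[l] f i₀) :
    ¬ ∀ᶠ x in l, ∑ i ∈ s, c i * f i x = 0 := by
  classical
  intro hsum
  have hrest : (fun x => ∑ i ∈ s.erase i₀, c i * f i x) =o[l] f i₀ :=
    IsLittleO.fun_sum fun i hi =>
      (ho i (Finset.mem_of_mem_erase hi) (Finset.ne_of_mem_erase hi)).const_mul_left (c i)
  have hsolve : (fun x => -(c i₀)⁻¹ * ∑ i ∈ s.erase i₀, c i * f i x) =ᶠ[l] f i₀ := by
    filter_upwards [hsum] with x hx
    rw [← Finset.add_sum_erase s _ hi₀] at hx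
    field_simp
    linear_combination -hx
  exact isLittleO_irrefl hf ((hrest.const_mul_left _).congr' hsolve EventuallyEq.rfl)

variable {u v : α → 𝕜}

theorem isLittleO_monomial_of_toLex_lt (huv : u =o[l] v)
    (hflat : ∀ k : ℕ, (fun x => v x ^ (k + 1)) =o[l] fun x => u x ^ k) {i j i' j' : ℕ}
    (h : toLex (i + j, i) < toLex (i' + j', i')) :
    (fun x => u x ^ i' * v x ^ j') =o[l] fun x => u x ^ i * v x ^ j := by
  have hv : Tendsto v l (𝓝 0) := by simpa [isLittleO_one_iff] using hflat 0
  have hv_pow (d : ℕ) : (fun x => v x ^ (d + 1)) =o[l] fun _ => (1 : 𝕜) :=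
    (isLittleO_one_iff 𝕜).2 (by simpa using hv.pow (d + 1))
  have hv_bdd (d : ℕ) : (fun x => v x ^ d) =O[l] fun _ => (1 : 𝕜) := (hv.pow d).isBigO_one 𝕜
  rcases Prod.Lex.toLex_lt_toLex.1 h with hdeg | ⟨hdeg, hi⟩
  · rcases le_or_gt i i' with hii' | hi'i
    · obtain ⟨a, rfl⟩ := Nat.exists_eq_add_of_le hii'
      obtain ⟨d, hd⟩ := Nat.exists_eq_add_of_lt (show j < a + j' by omega)
      have key : (fun x => u x ^ a * v x ^ j') =o[l] fun x => v x ^ j * 1 :=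
        ((huv.isBigO.pow a).mul (isBigO_refl _ _)).trans_isLittleO
          (((isBigO_refl _ _).mul_isLittleO (hv_pow d)).congr_left fun x => by
            rw [← pow_add, ← pow_add, ← add_assoc, ← hd])
      exact ((isBigO_refl (fun x => u x ^ i) l).mul_isLittleO key).congr
        (fun x => by ring) (fun x => by ring)
    · obtain ⟨k, rfl⟩ := Nat.exists_eq_add_of_le hi'i.le
      obtain ⟨d, rfl⟩ := Nat.exists_eq_add_of_le (show j + (k + 1) ≤ j' by omega)
      have key : (fun x => v x ^ (k + 1) * v x ^ d) =o[l] fun x => u x ^ k * 1 :=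
        (hflat k).mul_isBigO (hv_bdd d)
      exact ((isBigO_refl (fun x => u x ^ i' * v x ^ j) l).mul_isLittleO key).congr
        (fun x => by ring) (fun x => by ring)
  · obtain ⟨a, rfl⟩ := Nat.exists_eq_add_of_le hi.le
    obtain rfl : j = j' + a := by omega
    exact ((isBigO_refl (fun x => u x ^ i * v x ^ j') l).mul_isLittleO
      (huv.pow (by omega : 0 < a))).congr (fun x => by ring) (fun x => by ring)

theorem MvPolynomial.not_eventually_eval_eq_zero_of_isLittleO (huv : u =o[l] v)
    (hflat : ∀ k : ℕ, (fun x => v x ^ (k + 1)) =o[l] fun x => u x ^ k)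
    (hu : ∃ᶠ x in l, u x ≠ 0) {q : MvPolynomial (Fin 2) 𝕜} (hq : q ≠ 0) :
    ¬ ∀ᶠ x in l, eval ![u x, v x] q = 0 := by
  obtain ⟨m₀, hm₀, hmin⟩ := q.support.exists_min_image (fun m => toLex (m 0 + m 1, m 0))
    (support_nonempty.2 hq)
  have heval (x : α) :
      eval ![u x, v x] q = ∑ m ∈ q.support, coeff m q * (u x ^ m 0 * v x ^ m 1) := by
    simp [eval_eq', Fin.prod_univ_two]
  simp only [heval]
  refine not_eventually_sum_eq_zero_of_isLittleO hm₀ (mem_support_iff.1 hm₀) ?_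
    fun m hm hne => isLittleO_monomial_of_toLex_lt huv hflat
      ((hmin m hm).lt_of_ne fun heq => hne ?_)
  · refine hu.mp ((huv.bound one_pos).mono fun x hx hux => ?_)
    have hvx : v x ≠ 0 := fun h => hux (by simpa [h] using hx)
    exact mul_ne_zero (pow_ne_zero _ hux) (pow_ne_zero _ hvx)
  · obtain ⟨hdeg, h0⟩ := Prod.mk.inj (toLex.injective heq)
    ext i
    fin_cases i <;> simp <;> omega

end Domination

section Substitution

open MvPolynomial

variable {R : Type*} [CommRing R]

theorem eval_bind₁_one_sub_one_add (p : MvPolynomial (Fin 2) R) (x y : R) :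
    eval ![1 - x, y - 1] (bind₁ ![1 - X 0, 1 + X 1] p) = eval ![x, y] p := by
  rw [eval, eval₂Hom_bind₁]
  congr
  ext i
  fin_cases i <;> simp

theorem bind₁_one_sub_one_add_injective :
    Function.Injective (bind₁ (![1 - X 0, 1 + X 1] : Fin 2 → MvPolynomial (Fin 2) R)) := by
  refine Function.LeftInverse.injective (g := bind₁ ![1 - X 0, X 1 - 1]) fun p => ?_
  have hX : (fun i => bind₁ ![1 - X 0, X 1 - 1] (![1 - X 0, 1 + X 1] i)) =
      (X : Fin 2 → MvPolynomial (Fin 2) R) := by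
    funext i
    fin_cases i <;> simp
  rw [← AlgHom.comp_apply, bind₁_comp_bind₁, hX, bind₁_X_left, AlgHom.id_apply]

end Substitution

section Estimates

open Real intervalIntegral

theorem integral_inv_add_mul_sub {ε c a b : ℝ} (hε : 0 < ε) (hc : 0 < c) (hab : a ≤ b) :
    ∫ x in a..b, (ε + c * (b - x))⁻¹ = c⁻¹ * log (1 + c * (b - a) / ε) := by
  have h := integral_comp_sub_mul (fun y : ℝ => y⁻¹) (a := a) (b := b) hc.ne' (ε + c * b)
  simp only [smul_eq_mul, add_sub_cancel_right] at h
  rw [show (fun x => (ε + c * (b - x))⁻¹) = fun x => (ε + c * b - c * x)⁻¹ by ext; ring_nf, h,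
    integral_inv_of_pos hε (by nlinarith)]
  congr 2
  field_simp
  ring

theorem intervalIntegrable_inv_add_mul_sub {ε c a b : ℝ} (hε : 0 < ε) (hc : 0 ≤ c)
    (hab : a ≤ b) : IntervalIntegrable (fun x => (ε + c * (b - x))⁻¹) MeasureTheory.volume a b :=
  ContinuousOn.intervalIntegrable <| ContinuousOn.inv₀ (by fun_prop) fun x hx => by
    rw [uIcc_of_le hab] at hx
    nlinarith [hx.2]

theorem ellipticE_sub_one_eq_integral (z : ℝ) :
    ellipticE z - 1 = ∫ k in (0 : ℝ)..(π / 2), (√(1 - z ^ 2 * sin k ^ 2) - cos k) := by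
  rw [integral_sub (Continuous.intervalIntegrable (by fun_prop) _ _)
    (continuous_cos.intervalIntegrable _ _)]
  simp [ellipticE, integral_cos]

theorem sqrt_one_sub_sq_mul_sin_sq_sub_cos {z k : ℝ} (hz : z ^ 2 < 1) (hk : 0 ≤ cos k) :
    √(1 - z ^ 2 * sin k ^ 2) - cos k
      = (1 - z ^ 2) * sin k ^ 2 / (√(1 - z ^ 2 * sin k ^ 2) + cos k) := by
  have hA : 0 < 1 - z ^ 2 * sin k ^ 2 := by nlinarith [sin_sq_le_one k]
  have hD : 0 < √(1 - z ^ 2 * sin k ^ 2) + cos k := by positivity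
  rw [eq_div_iff hD.ne']
  nlinarith [sq_sqrt hA.le, sin_sq_add_cos_sq k]

theorem sqrt_one_sub_sq_le (z k : ℝ) : √(1 - z ^ 2) ≤ √(1 - z ^ 2 * sin k ^ 2) :=
  sqrt_le_sqrt (by nlinarith [sin_sq_le_one k, sq_nonneg z])

theorem sqrt_one_sub_sq_mul_sin_sq_le {z k : ℝ} (hz : z ^ 2 ≤ 1) (hk : 0 ≤ cos k) :
    √(1 - z ^ 2 * sin k ^ 2) ≤ √(1 - z ^ 2) + cos k := by
  rw [sqrt_le_left (by positivity)]
  nlinarith [sq_sqrt (sub_nonneg.2 hz), sqrt_nonneg (1 - z ^ 2), sin_sq_add_cos_sq k,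
    mul_nonneg (sqrt_nonneg (1 - z ^ 2)) hk, mul_nonneg (sub_nonneg.2 hz) (sq_nonneg (cos k))]

theorem sqrt_one_sub_sq_mul_sin_sq_sub_cos_le {z k : ℝ} (hz : z ^ 2 < 1) (hk₀ : 0 ≤ k)
    (hk₁ : k ≤ π / 2) :
    √(1 - z ^ 2 * sin k ^ 2) - cos k ≤ (1 - z ^ 2) * (√(1 - z ^ 2) + 2 / π * (π / 2 - k))⁻¹ := by
  have hcos : 2 / π * (π / 2 - k) ≤ cos k := by
    rw [← sin_pi_div_two_sub]
    exact mul_le_sin (by linarith) (by linarith)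
  have hlin : 0 ≤ 2 / π * (π / 2 - k) := mul_nonneg (by positivity) (by linarith)
  have hε : 0 < √(1 - z ^ 2) := sqrt_pos.2 (by linarith)
  rw [sqrt_one_sub_sq_mul_sin_sq_sub_cos hz (by linarith), ← div_eq_mul_inv]
  exact div_le_div₀ (by linarith) (mul_le_of_le_one_right (by linarith) (sin_sq_le_one k))
    (by linarith) (by linarith [sqrt_one_sub_sq_le z k])

theorem le_sqrt_one_sub_sq_mul_sin_sq_sub_cos {z k : ℝ} (hz : z ^ 2 < 1) (hk₀ : π / 4 ≤ k)
    (hk₁ : k ≤ π / 2) :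
    (1 - z ^ 2) / 4 * (√(1 - z ^ 2) + (π / 2 - k))⁻¹ ≤ √(1 - z ^ 2 * sin k ^ 2) - cos k := by
  have hπ := pi_pos
  have hε : 0 < √(1 - z ^ 2) := sqrt_pos.2 (by linarith)
  have hcos : 0 ≤ cos k := cos_nonneg_of_mem_Icc ⟨by linarith, hk₁⟩
  have hcos_le : cos k ≤ π / 2 - k := by
    rw [← sin_pi_div_two_sub]
    exact sin_le (by linarith)
  have hsin : 1 / 2 ≤ sin k ^ 2 := by
    have := sin_le_sin_of_le_of_le_pi_div_two (by linarith) hk₁ hk₀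
    rw [sin_pi_div_four] at this
    nlinarith [sq_sqrt (show (0 : ℝ) ≤ 2 by norm_num), sqrt_nonneg 2]
  have hsplit : (1 - z ^ 2) / 4 * (√(1 - z ^ 2) + (π / 2 - k))⁻¹
      = (1 - z ^ 2) * (1 / 2) / (2 * (√(1 - z ^ 2) + (π / 2 - k))) := by
    field_simp
    ring
  rw [sqrt_one_sub_sq_mul_sin_sq_sub_cos hz hcos, hsplit]
  exact div_le_div₀ (by nlinarith) (by nlinarith) (by linarith [sqrt_one_sub_sq_le z k])
    (by linarith [sqrt_one_sub_sq_mul_sin_sq_le hz.le hcos])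

theorem ellipticE_sub_one_le {z : ℝ} (hz : z ^ 2 < 1) :
    ellipticE z - 1 ≤ π / 2 * (1 - z ^ 2) * log (1 + 1 / √(1 - z ^ 2)) := by
  have hε : 0 < √(1 - z ^ 2) := sqrt_pos.2 (by linarith)
  have hπ := pi_pos
  calc ellipticE z - 1
      ≤ ∫ k in (0 : ℝ)..(π / 2), (1 - z ^ 2) * (√(1 - z ^ 2) + 2 / π * (π / 2 - k))⁻¹ := by
        rw [ellipticE_sub_one_eq_integral]
        exact integral_mono_on (by positivity) (Continuous.intervalIntegrable (by fun_prop) _ _)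
          ((intervalIntegrable_inv_add_mul_sub hε (by positivity) (by positivity)).const_mul _)
          fun k hk => sqrt_one_sub_sq_mul_sin_sq_sub_cos_le hz hk.1 hk.2
    _ = π / 2 * (1 - z ^ 2) * log (1 + 1 / √(1 - z ^ 2)) := by
        rw [integral_const_mul, integral_inv_add_mul_sub hε (by positivity) (by positivity),
          show 2 / π * (π / 2 - 0) = 1 by rw [sub_zero]; field_simp, inv_div]
        ring

theorem le_ellipticE_sub_one {z : ℝ} (hz : z ^ 2 < 1) :
    (1 - z ^ 2) / 4 * log (1 + π / 4 / √(1 - z ^ 2)) ≤ ellipticE z - 1 := by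
  have hε : 0 < √(1 - z ^ 2) := sqrt_pos.2 (by linarith)
  have hπ := pi_pos
  set f := fun k => √(1 - z ^ 2 * sin k ^ 2) - cos k
  have hf : Continuous f := by fun_prop
  have hf_nonneg : ∀ k ∈ Icc 0 (π / 2), 0 ≤ f k := by
    rintro k ⟨hk₀, hk₁⟩
    have hcos : 0 ≤ cos k := cos_nonneg_of_mem_Icc ⟨by linarith, hk₁⟩
    simp only [f]
    rw [sqrt_one_sub_sq_mul_sin_sq_sub_cos hz hcos]
    have : 0 ≤ 1 - z ^ 2 := by linarith
    positivity
  calc (1 - z ^ 2) / 4 * log (1 + π / 4 / √(1 - z ^ 2))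
      = ∫ k in (π / 4)..(π / 2), (1 - z ^ 2) / 4 * (√(1 - z ^ 2) + 1 * (π / 2 - k))⁻¹ := by
        rw [integral_const_mul, integral_inv_add_mul_sub hε one_pos (by linarith)]
        ring_nf
    _ ≤ ∫ k in (π / 4)..(π / 2), f k :=
        integral_mono_on (by linarith)
          ((intervalIntegrable_inv_add_mul_sub hε zero_le_one (by linarith)).const_mul _)
          (hf.intervalIntegrable _ _) fun k hk => by
            simpa only [one_mul] using le_sqrt_one_sub_sq_mul_sin_sq_sub_cos hz hk.1 hk.2
    _ ≤ ∫ k in (0 : ℝ)..(π / 2), f k := by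
        rw [← integral_add_adjacent_intervals (hf.intervalIntegrable 0 (π / 4))
          (hf.intervalIntegrable _ _)]
        have : 0 ≤ ∫ k in (0 : ℝ)..(π / 4), f k := integral_nonneg (by positivity)
          fun k hk => hf_nonneg k ⟨hk.1, by linarith [hk.2]⟩
        linarith
    _ = ellipticE z - 1 := (ellipticE_sub_one_eq_integral z).symm

end Estimates

section Asymptotics

open Real

theorem tendsto_one_sub_nhdsLT_one : Tendsto (fun z : ℝ => 1 - z) (𝓝[<] 1) (𝓝[>] 0) :=
  tendsto_nhdsWithin_iff.2
    ⟨((continuous_const.sub continuous_id).tendsto' 1 0 (sub_self 1)).mono_left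
      nhdsWithin_le_nhds, eventually_nhdsWithin_of_forall fun _ hz => sub_pos.2 (mem_Iio.1 hz)⟩

theorem tendsto_sqrt_one_sub_sq_nhdsLT_one :
    Tendsto (fun z : ℝ => √(1 - z ^ 2)) (𝓝[<] 1) (𝓝[>] 0) :=
  tendsto_nhdsWithin_iff.2
    ⟨((by fun_prop : Continuous fun z : ℝ => √(1 - z ^ 2)).tendsto' 1 0 (by simp)).mono_left
      nhdsWithin_le_nhds, by
        filter_upwards [Ioo_mem_nhdsLT (show (0 : ℝ) < 1 by norm_num)] with z hz
        exact sqrt_pos.2 (by nlinarith [hz.1, hz.2])⟩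

theorem isLittleO_one_sub_ellipticE_sub_one :
    (fun z => 1 - z) =o[𝓝[<] 1] fun z => ellipticE z - 1 := by
  have hlog : Tendsto (fun z : ℝ => log (1 + π / 4 / √(1 - z ^ 2))) (𝓝[<] 1) atTop := by
    refine tendsto_log_atTop.comp (tendsto_atTop_add_const_left _ 1 ?_)
    simpa only [div_eq_mul_inv (π / 4), Function.comp_def] using
      (tendsto_inv_nhdsGT_zero.comp tendsto_sqrt_one_sub_sq_nhdsLT_one).const_mul_atTop
        (by positivity : 0 < π / 4)
  refine isLittleO_iff.2 fun c hc => ?_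
  filter_upwards [hlog.eventually_ge_atTop (4 / c),
    Ioo_mem_nhdsLT (show (0 : ℝ) < 1 by norm_num)] with z hL hz
  have hz2 : z ^ 2 < 1 := by nlinarith [hz.1, hz.2]
  have hE := le_ellipticE_sub_one hz2
  rw [norm_of_nonneg (by linarith [hz.2] : (0 : ℝ) ≤ 1 - z)]
  calc 1 - z = c * ((1 - z) / 4 * (4 / c)) := by field_simp
    _ ≤ c * ((1 - z ^ 2) / 4 * log (1 + π / 4 / √(1 - z ^ 2))) := by
        gcongr
        nlinarith [hz.1, hz.2]
    _ ≤ c * ‖ellipticE z - 1‖ := by gcongr; exact hE.trans (le_norm_self _)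

theorem ellipticE_sub_one_le_mul_neg_log {z : ℝ} (h₀ : 3 / 4 ≤ z) (h₁ : z < 1) :
    ellipticE z - 1 ≤ π * (1 - z) * -log (1 - z) := by
  set u := 1 - z
  have hu₀ : 0 < u := by linarith
  have hε : 2 * u ≤ √(1 - z ^ 2) := le_sqrt_of_sq_le (by nlinarith)
  have hlog : log (1 + 1 / √(1 - z ^ 2)) ≤ -log u := by
    rw [← log_inv]
    refine log_le_log (by positivity) ?_
    calc 1 + 1 / √(1 - z ^ 2) ≤ 1 + 1 / (2 * u) := by gcongr
      _ ≤ u⁻¹ := by field_simp; linarith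
  have hlog₀ : 0 ≤ log (1 + 1 / √(1 - z ^ 2)) := log_nonneg (le_add_of_nonneg_right (by positivity))
  calc ellipticE z - 1 ≤ π / 2 * (1 - z ^ 2) * log (1 + 1 / √(1 - z ^ 2)) :=
        ellipticE_sub_one_le (by nlinarith)
    _ ≤ π / 2 * (2 * u) * -log u := by
        gcongr
        nlinarith
    _ = π * u * -log u := by ring

theorem tendsto_mul_neg_log_pow_nhdsGT_zero (n : ℕ) :
    Tendsto (fun x => x * (-log x) ^ n) (𝓝[>] 0) (𝓝 0) := by
  refine ((tendsto_pow_log_div_mul_add_atTop 1 0 n one_ne_zero).comp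
    tendsto_inv_nhdsGT_zero).congr' (eventually_nhdsWithin_of_forall fun x hx => ?_)
  simp [log_inv, div_eq_mul_inv]
  ring

theorem isLittleO_ellipticE_sub_one_pow (k : ℕ) :
    (fun z => (ellipticE z - 1) ^ (k + 1)) =o[𝓝[<] 1] fun z => (1 - z) ^ k := by
  have hO : (fun z => (ellipticE z - 1) ^ (k + 1)) =O[𝓝[<] 1]
      fun z => (1 - z) ^ k * ((1 - z) * (-log (1 - z)) ^ (k + 1)) := by
    refine IsBigO.of_bound (π ^ (k + 1)) ?_
    filter_upwards [Ioo_mem_nhdsLT (show (3 / 4 : ℝ) < 1 by norm_num)] with z hz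
    have hz2 : z ^ 2 < 1 := by nlinarith [hz.1, hz.2]
    have hE₀ : 0 ≤ ellipticE z - 1 := le_trans (mul_nonneg (by linarith)
      (log_nonneg (le_add_of_nonneg_right (by positivity)))) (le_ellipticE_sub_one hz2)
    rw [norm_of_nonneg (by positivity)]
    calc (ellipticE z - 1) ^ (k + 1) ≤ (π * (1 - z) * -log (1 - z)) ^ (k + 1) :=
          pow_le_pow_left₀ hE₀ (ellipticE_sub_one_le_mul_neg_log hz.1.le hz.2) _
      _ = π ^ (k + 1) * ((1 - z) ^ k * ((1 - z) * (-log (1 - z)) ^ (k + 1))) := by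
          rw [mul_pow, mul_pow, pow_succ (1 - z)]
          ring
      _ ≤ π ^ (k + 1) * ‖(1 - z) ^ k * ((1 - z) * (-log (1 - z)) ^ (k + 1))‖ := by
          gcongr; exact le_norm_self _
  refine hO.trans_isLittleO (((isBigO_refl _ _).mul_isLittleO ((isLittleO_one_iff ℝ).2
    ((tendsto_mul_neg_log_pow_nhdsGT_zero _).comp tendsto_one_sub_nhdsLT_one))).congr_right
    fun _ => mul_one _)

end Asymptotics

section Analyticity

open Real intervalIntegral Metric MeasureTheory
open scoped Interval

theorem differentiableOn_intervalIntegral_of_hasDerivAt {𝕜 E : Type*} [RCLike 𝕜]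
    [NormedAddCommGroup E] [NormedSpace ℝ E] [NormedSpace 𝕜 E] {F F' : 𝕜 → ℝ → E} {U : Set 𝕜}
    {a b : ℝ} (hU : IsOpen U) (hF : ContinuousOn (Function.uncurry F) (U ×ˢ [[a, b]]))
    (hF' : ContinuousOn (Function.uncurry F') (U ×ˢ [[a, b]]))
    (hderiv : ∀ w ∈ U, ∀ t ∈ [[a, b]], HasDerivAt (F · t) (F' w t) w) :
    DifferentiableOn 𝕜 (fun w => ∫ t in a..b, F w t) U := by
  intro w₀ hw₀
  obtain ⟨r, hr, hball⟩ := Metric.isOpen_iff.1 hU w₀ hw₀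
  have hKU : closedBall w₀ (r / 2) ×ˢ [[a, b]] ⊆ U ×ˢ [[a, b]] :=
    prod_mono ((closedBall_subset_ball (half_lt_self hr)).trans hball) subset_rfl
  obtain ⟨C, hC⟩ := ((isCompact_closedBall w₀ (r / 2)).prod
    isCompact_uIcc).exists_bound_of_continuousOn (hF'.mono hKU)
  have hslice {G : 𝕜 → ℝ → E} (hG : ContinuousOn (Function.uncurry G) (U ×ˢ [[a, b]])) {w : 𝕜}
      (hw : w ∈ U) : ContinuousOn (G w) [[a, b]] :=
    hG.comp (continuousOn_const.prodMk continuousOn_id) fun _ ht => ⟨hw, ht⟩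
  refine (hasDerivAt_integral_of_dominated_loc_of_deriv_le (bound := fun _ => C)
    (ball_mem_nhds w₀ (half_pos hr)) ?_ (hslice hF hw₀).intervalIntegrable
    (((hslice hF' hw₀).mono uIoc_subset_uIcc).aestronglyMeasurable measurableSet_uIoc)
    (ae_of_all _ fun t ht w hw => hC (w, t) ⟨ball_subset_closedBall hw, uIoc_subset_uIcc ht⟩)
    intervalIntegrable_const (ae_of_all _ fun t ht w hw => hderiv w
      (hball (ball_subset_ball (half_le_self hr.le) hw)) t (uIoc_subset_uIcc ht))).2
    |>.differentiableAt.differentiableWithinAt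
  filter_upwards [hU.mem_nhds hw₀] with w hw
  exact ((hslice hF hw).mono uIoc_subset_uIcc).aestronglyMeasurable measurableSet_uIoc

def complexEllipticE (w : ℂ) : ℂ :=
  ∫ t in (0 : ℝ)..(π / 2), (1 - w ^ 2 * (sin t : ℂ) ^ 2) ^ (1 / 2 : ℂ)

theorem one_sub_sq_mul_sin_sq_mem_slitPlane {w : ℂ} (hw : ‖w‖ < 1) (t : ℝ) :
    1 - w ^ 2 * (sin t : ℂ) ^ 2 ∈ Complex.slitPlane := by
  have hlt : ‖w ^ 2 * (sin t : ℂ) ^ 2‖ < 1 := by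
    rw [norm_mul, norm_pow, norm_pow, Complex.norm_real, norm_eq_abs, sq_abs]
    nlinarith [sin_sq_le_one t, norm_nonneg w, sq_nonneg (sin t)]
  refine Or.inl ?_
  rw [Complex.sub_re, Complex.one_re]
  linarith [Complex.re_le_norm (w ^ 2 * (sin t : ℂ) ^ 2)]

theorem differentiableOn_complexEllipticE : DifferentiableOn ℂ complexEllipticE (ball 0 1) := by
  have hslit : ∀ p ∈ ball (0 : ℂ) 1 ×ˢ univ, 1 - p.1 ^ 2 * (sin p.2 : ℂ) ^ 2 ∈ Complex.slitPlane :=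
    fun p hp => one_sub_sq_mul_sin_sq_mem_slitPlane (by simpa using hp.1) p.2
  refine differentiableOn_intervalIntegral_of_hasDerivAt isOpen_ball
    (F' := fun w t => 1 / 2 * (1 - w ^ 2 * (sin t : ℂ) ^ 2) ^ (1 / 2 - 1 : ℂ) *
      -(2 * w * (sin t : ℂ) ^ 2))
    ((ContinuousOn.cpow_const (by fun_prop) hslit).mono (prod_mono subset_rfl (subset_univ _)))
    ((((ContinuousOn.cpow_const (by fun_prop) hslit).const_mul _).mul (by fun_prop)).mono
      (prod_mono subset_rfl (subset_univ _))) fun w hw t _ => ?_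
  refine HasDerivAt.cpow_const ?_ (one_sub_sq_mul_sin_sq_mem_slitPlane (by simpa using hw) t)
  simpa using ((hasDerivAt_pow 2 w).mul_const ((sin t : ℂ) ^ 2)).const_sub 1

theorem complexEllipticE_ofReal {x : ℝ} (hx : x ^ 2 ≤ 1) : complexEllipticE x = ellipticE x := by
  rw [complexEllipticE, ellipticE, ← intervalIntegral.integral_ofReal]
  refine integral_congr fun t _ => ?_
  have hA : 0 ≤ 1 - x ^ 2 * sin t ^ 2 := by nlinarith [sin_sq_le_one t]
  rw [sqrt_eq_rpow, Complex.ofReal_cpow hA]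
  push_cast
  ring_nf

theorem analyticOnNhd_ellipticE : AnalyticOnNhd ℝ ellipticE (Ioo (-1) 1) := by
  intro x hx
  have hxc : (x : ℂ) ∈ ball (0 : ℂ) 1 := by simpa [abs_lt] using hx
  have hA : AnalyticAt ℂ complexEllipticE x :=
    differentiableOn_complexEllipticE.analyticAt (isOpen_ball.mem_nhds hxc)
  refine ((Complex.reCLM.analyticAt _).comp (hA.restrictScalars.comp
    (Complex.ofRealCLM.analyticAt x))).congr ?_
  filter_upwards [isOpen_Ioo.mem_nhds hx] with y hy
  have hy2 : y ^ 2 ≤ 1 := by nlinarith [hy.1, hy.2]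
  simp [complexEllipticE_ofReal hy2]

theorem analyticOnNhd_eval_ellipticE (p : MvPolynomial (Fin 2) ℝ) :
    AnalyticOnNhd ℝ (fun z => MvPolynomial.eval ![z, ellipticE z] p) (Ioo (-1) 1) := by
  simpa [MvPolynomial.coe_aeval_eq_eval] using AnalyticOnNhd.aeval_mvPolynomial
    (f := fun z => ![z, ellipticE z])
    (Fin.forall_fin_two.2 ⟨analyticOnNhd_id, analyticOnNhd_ellipticE⟩) p

end Analyticity

/-- The complete elliptic integral of the second kind is transcendental over `ℝ` on
`(0, 1)`: no nonzero real polynomial in two variables vanishes identically on any piece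
of its graph. -/
theorem ellipticE_transcendental :
    ∀ p : MvPolynomial (Fin 2) ℝ, p ≠ 0 → ∀ a b : ℝ, 0 < a → a < b → b < 1 →
      ∃ z ∈ Set.Ioo a b, MvPolynomial.eval ![z, ellipticE z] p ≠ 0 := by
  intro p hp a b ha hab hb
  by_contra! hvanish
  have hzero : EqOn (fun z => MvPolynomial.eval ![z, ellipticE z] p) 0 (Ioo (-1) 1) :=
    (analyticOnNhd_eval_ellipticE p).eqOn_zero_of_preconnected_of_eventuallyEq_zero
      isPreconnected_Ioo (z₀ := (a + b) / 2) ⟨by linarith, by linarith⟩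
      (mem_of_superset (Ioo_mem_nhds (by linarith) (by linarith)) hvanish)
  have hu : ∀ᶠ z in 𝓝[<] (1 : ℝ), 1 - z ≠ 0 :=
    eventually_nhdsWithin_of_forall fun z hz => sub_ne_zero.2 (ne_of_gt hz)
  refine MvPolynomial.not_eventually_eval_eq_zero_of_isLittleO
    isLittleO_one_sub_ellipticE_sub_one isLittleO_ellipticE_sub_one_pow hu.frequently
    ((map_ne_zero_iff _ bind₁_one_sub_one_add_injective).2 hp) ?_
  filter_upwards [Ioo_mem_nhdsLT (show (-1 : ℝ) < 1 by norm_num)] with z hz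
  rw [eval_bind₁_one_sub_one_add]
  exact hzero hz

end
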